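/- arXiv:1608.08320 — 9 statements merged into one kernel-verified Lean document; each statement's English description precedes it below -/
import Mathlib

section
/- Let n be a positive natural number and let x_1, ..., x_n be nonnegative real numbers with arithmetic mean A = (x_1 + ... + x_n)/n and geometric mean G = (x_1 x_2 ... x_n)^(1/n). Then A - G = ∑_{k=1}^∞ 2^{k-1} G^{1 - 1/2^{k-1}} · (1/n) ∑_{i=1}^n ( x_i^{1/2^k} - G^{1/2^k} )^2, where the infinite series on the right-hand side converges to A - G. -/
/-!
Put `f p = G ^ (1 - p) * ∑ wᵢ xᵢ ^ p - G` (`amgmGap`), so that `f 1 = A - G`.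
Expanding the square gives `G ^ (1 - 2q) * ∑ wᵢ (xᵢ ^ q - G ^ q) ^ 2 = f (2q) - 2 f q`,
hence the `k`-th term of the series is `uₖ - uₖ₊₁` with `uₖ = 2 ^ k f (2 ^ -k)`, and the series telescopes to `u₀ - lim uₖ`.
The limit is `0`: for `G > 0`, `f p = G (h p - h 0)` with `h p = ∑ wᵢ (xᵢ / G) ^ p`, and
`h' 0 = ∑ wᵢ log (xᵢ / G) = 0` by the definition of `G`; for `G = 0` the `uₖ` vanish.
-/

open Finset Real Filter Topology

theorem hasSum_of_eq_sub_succ_of_nonneg {t u : ℕ → ℝ} {l : ℝ} (ht : ∀ k, t k = u k - u (k + 1))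
    (ht₀ : ∀ k, 0 ≤ t k) (hu : Tendsto u atTop (𝓝 l)) : HasSum t (u 0 - l) := by
  refine (hasSum_iff_tendsto_nat_of_nonneg ht₀ _).2 ?_
  simpa only [ht, sum_range_sub'] using tendsto_const_nhds.sub hu

namespace Real

variable {ι : Type*} (s : Finset ι) (w x : ι → ℝ)

noncomputable def amgmGap (G p : ℝ) : ℝ := G ^ (1 - p) * ∑ i ∈ s, w i * x i ^ p - G

variable {s w x}

theorem amgmGap_one (G : ℝ) : amgmGap s w x G 1 = ∑ i ∈ s, w i * x i - G := by
  simp [amgmGap]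

theorem rpow_one_sub_two_mul_sum_sq_rpow_sub (hw₁ : ∑ i ∈ s, w i = 1) (hx : ∀ i ∈ s, 0 ≤ x i)
    {G q : ℝ} (hG : 0 ≤ G) (hq₀ : q ≠ 0) (hq₁ : q ≠ 1) :
    G ^ (1 - 2 * q) * ∑ i ∈ s, w i * (x i ^ q - G ^ q) ^ 2
      = amgmGap s w x G (2 * q) - 2 * amgmGap s w x G q := by
  have hqq : q + q ≠ 0 := by contrapose! hq₀; linarith
  have hsq : ∀ y : ℝ, 0 ≤ y → (y ^ q) ^ 2 = y ^ (2 * q) := fun y hy ↦ by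
    rw [sq, ← rpow_add' hy hqq, two_mul]
  have hG₁ : G ^ (1 - 2 * q) * G ^ (2 * q) = G := by
    rw [← rpow_add' hG (by norm_num), sub_add_cancel, rpow_one]
  have hG₂ : G ^ (1 - 2 * q) * G ^ q = G ^ (1 - q) := by
    rw [← rpow_add' hG (by contrapose! hq₁; linarith)]; ring_nf
  have hexpand : ∑ i ∈ s, w i * (x i ^ q - G ^ q) ^ 2
      = ∑ i ∈ s, w i * x i ^ (2 * q) - 2 * G ^ q * ∑ i ∈ s, w i * x i ^ q + G ^ (2 * q) := by
    simp only [sub_sq, mul_add, mul_sub, sum_add_distrib, sum_sub_distrib, ← sum_mul,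
      hsq _ hG, hw₁, mul_sum]
    refine congr_arg₂ _ (congr_arg₂ _ (sum_congr rfl fun i hi ↦ by rw [hsq _ (hx i hi)])
      (sum_congr rfl fun i _ ↦ by ring)) (one_mul _)
  rw [hexpand, amgmGap, amgmGap]
  linear_combination hG₁ - 2 * (∑ i ∈ s, w i * x i ^ q) * hG₂

theorem amgmGap_eq_mul_sum_div_rpow (hx : ∀ i ∈ s, 0 ≤ x i) {G : ℝ} (hG : 0 < G) (p : ℝ) :
    amgmGap s w x G p = G * (∑ i ∈ s, w i * (x i / G) ^ p - 1) := by
  have hdiv : ∀ i ∈ s, w i * (x i / G) ^ p = w i * x i ^ p / G ^ p := fun i hi ↦ by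
    rw [div_rpow (hx i hi) hG.le, mul_div_assoc]
  rw [amgmGap, sum_congr rfl hdiv, ← sum_div, rpow_sub hG, rpow_one]
  field_simp

theorem hasDerivAt_sum_mul_rpow {y : ι → ℝ} (hy : ∀ i ∈ s, 0 < y i) (p : ℝ) :
    HasDerivAt (fun q ↦ ∑ i ∈ s, w i * y i ^ q) (∑ i ∈ s, w i * (y i ^ p * log (y i))) p :=
  HasDerivAt.fun_sum fun i hi ↦ ((hasStrictDerivAt_const_rpow (hy i hi) p).hasDerivAt).const_mul _

theorem sum_mul_log_div_prod_rpow (hw₁ : ∑ i ∈ s, w i = 1) (hx : ∀ i ∈ s, 0 < x i) {G : ℝ}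
    (hG : G = ∏ i ∈ s, x i ^ w i) :
    ∑ i ∈ s, w i * log (x i / G) = 0 := by
  have hlogG : log G = ∑ j ∈ s, w j * log (x j) := by
    rw [hG, log_prod fun j hj ↦ (rpow_pos_of_pos (hx j hj) _).ne']
    exact sum_congr rfl fun j hj ↦ by rw [log_rpow (hx j hj)]
  have hG₀ : G ≠ 0 := hG ▸ (prod_pos fun j hj ↦ rpow_pos_of_pos (hx j hj) _).ne'
  rw [sum_congr rfl fun i hi ↦ by rw [log_div (hx i hi).ne' hG₀, mul_sub], sum_sub_distrib,
    ← sum_mul, hw₁, one_mul, hlogG, sub_self]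

theorem tendsto_amgmGap_div (hw : ∀ i ∈ s, 0 < w i) (hw₁ : ∑ i ∈ s, w i = 1)
    (hx : ∀ i ∈ s, 0 ≤ x i) {G : ℝ} (hG : G = ∏ i ∈ s, x i ^ w i) :
    Tendsto (fun p ↦ amgmGap s w x G p / p) (𝓝[≠] 0) (𝓝 0) := by
  rcases (hG ▸ prod_nonneg fun i hi ↦ rpow_nonneg (hx i hi) (w i) : 0 ≤ G).eq_or_lt with hG₀ | hG₀
  · refine tendsto_const_nhds.congr' ?_
    filter_upwards [nhdsWithin_le_nhds (eventually_ne_nhds zero_ne_one)] with p hp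
    rw [amgmGap, ← hG₀, zero_rpow (sub_ne_zero.2 hp.symm)]
    simp
  · have hxpos : ∀ i ∈ s, 0 < x i := fun i hi ↦ (hx i hi).lt_of_ne fun h ↦ hG₀.ne' <| hG ▸
      prod_eq_zero hi (by rw [← h, zero_rpow (hw i hi).ne'])
    have hder := hasDerivAt_sum_mul_rpow (w := w) (fun i hi ↦ div_pos (hxpos i hi) hG₀) 0
    simp only [rpow_zero, one_mul, sum_mul_log_div_prod_rpow hw₁ hxpos hG] at hder
    have := (hasDerivAt_iff_tendsto_slope.1 hder).const_mul G
    rw [mul_zero] at this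
    refine this.congr' (Eventually.of_forall fun p ↦ ?_)
    simp only [amgmGap_eq_mul_sum_div_rpow hx hG₀, slope_def_field, rpow_zero, mul_one, hw₁,
      sub_zero]
    ring

theorem hasSum_arith_mean_sub_geom_mean_weighted (hw : ∀ i ∈ s, 0 < w i)
    (hw₁ : ∑ i ∈ s, w i = 1) (hx : ∀ i ∈ s, 0 ≤ x i) {G : ℝ} (hG : G = ∏ i ∈ s, x i ^ w i) :
    HasSum (fun k : ℕ ↦ 2 ^ k * G ^ (1 - 1 / 2 ^ k : ℝ) *
        ∑ i ∈ s, w i * (x i ^ ((1 : ℝ) / 2 ^ (k + 1)) - G ^ ((1 : ℝ) / 2 ^ (k + 1))) ^ 2)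
      (∑ i ∈ s, w i * x i - G) := by
  have hG₀ : 0 ≤ G := hG ▸ prod_nonneg fun i hi ↦ rpow_nonneg (hx i hi) (w i)
  set u : ℕ → ℝ := fun k ↦ 2 ^ k * amgmGap s w x G (1 / 2 ^ k)
  have hu0 : u 0 = ∑ i ∈ s, w i * x i - G := by simp [u, amgmGap_one]
  rw [← hu0, ← sub_zero (u 0)]
  refine hasSum_of_eq_sub_succ_of_nonneg (fun k ↦ ?_) (fun k ↦ ?_) ?_
  · have hq₁ : (1 : ℝ) / 2 ^ (k + 1) ≠ 1 := by
      rw [ne_eq, div_eq_one_iff_eq (by positivity)]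
      exact (one_lt_pow₀ one_lt_two k.succ_ne_zero).ne
    have h := rpow_one_sub_two_mul_sum_sq_rpow_sub hw₁ hx hG₀ (by positivity) hq₁
    rw [show 2 * ((1 : ℝ) / 2 ^ (k + 1)) = 1 / 2 ^ k by rw [pow_succ]; field_simp] at h
    rw [mul_assoc, h]
    simp only [u, pow_succ]
    ring
  · exact mul_nonneg (mul_nonneg (by positivity) (rpow_nonneg hG₀ _))
      (sum_nonneg fun i hi ↦ mul_nonneg (hw i hi).le (sq_nonneg _))
  · have hpow : Tendsto (fun k : ℕ ↦ (1 : ℝ) / 2 ^ k) atTop (𝓝[≠] 0) := by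
      refine tendsto_nhdsWithin_of_tendsto_nhds_of_eventually_within _ ?_
        (Eventually.of_forall fun k ↦ by simp)
      simpa using tendsto_pow_atTop_nhds_zero_of_lt_one (by norm_num : (0 : ℝ) ≤ 1 / 2)
        (by norm_num)
    refine ((tendsto_amgmGap_div hw hw₁ hx hG).comp hpow).congr fun k ↦ ?_
    simp [u, mul_comm]

end Real

/-- **The new formula** (Theorem 2.1). For nonnegative reals `x 0, …, x (n-1)` with
arithmetic mean `A` and geometric mean `G`,
`A - G = ∑_{k=1}^∞ 2^(k-1) G^(1 - 1/2^(k-1)) (1/n) ∑ i (x i ^ (1/2^k) - G ^ (1/2^k))^2`,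
the series (indexed here by `k ↦ k+1`) converging to `A - G`. -/
theorem cauchy_formula (n : ℕ) (hn : 0 < n) (x : Fin n → ℝ) (hx : ∀ i, 0 ≤ x i)
    (A G : ℝ) (hA : A = (∑ i, x i) / n) (hG : G = (∏ i, x i) ^ ((1 : ℝ) / n)) :
    HasSum
      (fun k : ℕ =>
        (2 : ℝ) ^ k * G ^ (1 - 1 / 2 ^ k : ℝ) *
          ((1 / n : ℝ) *
            ∑ i, (x i ^ ((1 : ℝ) / 2 ^ (k + 1)) - G ^ ((1 : ℝ) / 2 ^ (k + 1))) ^ 2))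
      (A - G) := by
  have hw₁ : ∑ _i : Fin n, (1 / n : ℝ) = 1 := by
    simp [Nat.cast_ne_zero.2 hn.ne']
  have hG' : G = ∏ i, x i ^ ((1 : ℝ) / n) := by
    rw [hG, finsetProd_rpow _ _ fun i _ ↦ hx i]
  have hA' : A = ∑ i, 1 / n * x i := by
    rw [hA, ← mul_sum, one_div_mul_eq_div]
  simpa only [hA', mul_sum] using hasSum_arith_mean_sub_geom_mean_weighted
    (fun _ _ ↦ by positivity) hw₁ (fun i _ ↦ hx i) hG'
end

section
/- Let n be a positive natural number, let x_1, ..., x_n be positive real numbers with arithmetic mean A and geometric mean G, and for k ≥ 1 set y_k = 2^{k-1} G^{1 - 1/2^{k-1}} · (1/n) ∑_{i=1}^n ( x_i^{1/2^k} - G^{1/2^k} )^2 and Y_m = ∑_{k=1}^m y_k. Then for every m ≥ 1, A - G - Y_m = 2^m G^{1 - 1/2^m} ( (1/n) ∑_{i=1}^n x_i^{1/2^m} - G^{1/2^m} ). -/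
open Finset Real

/-- Formula (2.2): for positive reals with arithmetic mean `A` and geometric mean `G`, setting
`y k = 2^(k-1) G^(1-1/2^(k-1)) (1/n) ∑ i (x i^(1/2^k) - G^(1/2^k))^2` and `Y m = ∑_{k=1}^m y k`
(here the sum over `k ∈ range m` corresponds to `k+1` running from `1` to `m`), one has
`A - G - Y m = 2^m G^(1-1/2^m) ((1/n) ∑ i x i^(1/2^m) - G^(1/2^m))` for every `m ≥ 1`. -/
theorem cauchy_partial_sum_formula (n : ℕ) (hn : 0 < n) (x : Fin n → ℝ) (hx : ∀ i, 0 < x i)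
    (A G : ℝ) (hA : A = (∑ i, x i) / n) (hG : G = (∏ i, x i) ^ ((1 : ℝ) / n))
    (m : ℕ) (hm : 1 ≤ m) :
    A - G -
        ∑ k ∈ Finset.range m,
          (2 : ℝ) ^ k * G ^ (1 - 1 / 2 ^ k : ℝ) *
            ((1 / n : ℝ) *
              ∑ i, (x i ^ ((1 : ℝ) / 2 ^ (k + 1)) - G ^ ((1 : ℝ) / 2 ^ (k + 1))) ^ 2) =
      (2 : ℝ) ^ m * G ^ (1 - 1 / 2 ^ m : ℝ) *
        ((1 / n : ℝ) * ∑ i, x i ^ ((1 : ℝ) / 2 ^ m) - G ^ ((1 : ℝ) / 2 ^ m)) := by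

  have hG0 : 0 < G := by
    rw [hG]
    exact Real.rpow_pos_of_pos (Finset.prod_pos fun i _ => hx i) _
  have hn0 : (n : ℝ) ≠ 0 := Nat.cast_ne_zero.mpr hn.ne'
  clear hm
  induction m with
  | zero =>
    simp only [Finset.range_zero, Finset.sum_empty, sub_zero, pow_zero]
    norm_num [Real.rpow_one]
    rw [hA]
    ring
  | succ k ih =>
    rw [Finset.sum_range_succ, ← sub_sub, ih]
    have hd : ∀ i, (x i ^ ((1:ℝ)/2^(k+1)) - G ^ ((1:ℝ)/2^(k+1)))^2
        = x i ^ ((1:ℝ)/2^k) - 2 * G ^ ((1:ℝ)/2^(k+1)) * x i ^ ((1:ℝ)/2^(k+1)) + G ^ ((1:ℝ)/2^k) := by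
      intro i
      have h1 : ∀ y : ℝ, 0 < y → (y ^ ((1:ℝ)/2^(k+1)))^2 = y ^ ((1:ℝ)/2^k) := by
        intro y hy
        rw [← Real.rpow_natCast (y ^ ((1:ℝ)/2^(k+1))) 2, ← Real.rpow_mul hy.le]
        congr 1
        rw [pow_succ]
        push_cast
        ring
      rw [sub_sq, h1 _ (hx i), h1 _ hG0]
      ring
    simp only [hd]
    rw [Finset.sum_add_distrib, Finset.sum_sub_distrib, ← Finset.mul_sum,
      Finset.sum_const, Finset.card_univ, Fintype.card_fin, nsmul_eq_mul]
    have hB : G ^ (1 - 1/2^k : ℝ) * G ^ ((1:ℝ)/2^(k+1)) = G ^ (1 - 1/2^(k+1) : ℝ) := by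
      rw [← Real.rpow_add hG0]
      congr 1
      rw [pow_succ]; ring
    have hg2 : G ^ ((1:ℝ)/2^k) = G ^ ((1:ℝ)/2^(k+1)) * G ^ ((1:ℝ)/2^(k+1)) := by
      rw [← Real.rpow_add hG0]; congr 1; rw [pow_succ]; ring
    rw [← hB, hg2, pow_succ]
    field_simp
    ring
end

section
/- Let n be a positive natural number. Then for any nonnegative real numbers x_1, ..., x_n, (x_1 + ... + x_n)/n - (x_1 x_2 ... x_n)^(1/n) ≥ (1/n) ∑_{i=1}^n (√(x_i) - √G)^2, where G = (x_1 x_2 ... x_n)^(1/n). -/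
open Finset Real

/-- Strong Cauchy inequality (2.6):
`(x_1 + ⋯ + x_n)/n - G ≥ (1/n) ∑ i (√(x i) - √G)^2` where `G` is the geometric mean. -/
theorem strong_cauchy_inequality (n : ℕ) (hn : 0 < n) (x : Fin n → ℝ) (hx : ∀ i, 0 ≤ x i) :
    (∑ i, x i) / n - (∏ i, x i) ^ ((1 : ℝ) / n) ≥
      (1 / n : ℝ) *
        ∑ i, (Real.sqrt (x i) - Real.sqrt ((∏ j, x j) ^ ((1 : ℝ) / n))) ^ 2 := by
  have hn' : (0:ℝ) < n := Nat.cast_pos.mpr hn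
  set G : ℝ := (∏ i, x i) ^ ((1:ℝ)/n) with hGdef
  have hP : 0 ≤ ∏ i, x i := Finset.prod_nonneg fun i _ => hx i
  have hG : 0 ≤ G := Real.rpow_nonneg hP _
  -- AM-GM for the square roots
  have hamgm : ∏ i, (Real.sqrt (x i)) ^ ((1:ℝ)/n) ≤ ∑ i, (1/n:ℝ) * Real.sqrt (x i) :=
    Real.geom_mean_le_arith_mean_weighted univ (fun _ => (1/n:ℝ)) (fun i => Real.sqrt (x i))
      (fun i _ => by positivity)
      (by simp [Finset.sum_const, mul_one_div]; field_simp)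
      (fun i _ => Real.sqrt_nonneg _)
  have hprod : ∏ i, (Real.sqrt (x i)) ^ ((1:ℝ)/n) = Real.sqrt G := by
    rw [Real.finset_prod_rpow _ _ (fun i _ => Real.sqrt_nonneg _)]
    rw [show ∏ i, Real.sqrt (x i) = Real.sqrt (∏ i, x i) by
      rw [Real.sqrt_eq_rpow, ← Real.finset_prod_rpow _ _ (fun i _ => hx i)]
      simp [Real.sqrt_eq_rpow]]
    rw [Real.sqrt_eq_rpow, Real.sqrt_eq_rpow, ← Real.rpow_mul hP, hGdef,
      ← Real.rpow_mul hP]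
    ring_nf
  have hS : Real.sqrt G ≤ (∑ i, Real.sqrt (x i)) / n := by
    rw [← hprod]
    calc _ ≤ ∑ i, (1/n:ℝ) * Real.sqrt (x i) := hamgm
    _ = _ := by rw [← Finset.mul_sum]; ring
  -- expand the sum of squares
  have hexp : ∑ i, (Real.sqrt (x i) - Real.sqrt G) ^ 2
      = ∑ i, x i - 2 * Real.sqrt G * ∑ i, Real.sqrt (x i) + n * G := by
    have : ∀ i : Fin n, (Real.sqrt (x i) - Real.sqrt G) ^ 2
        = x i - 2 * Real.sqrt G * Real.sqrt (x i) + G := by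
      intro i
      have h1 : Real.sqrt (x i) ^ 2 = x i := Real.sq_sqrt (hx i)
      have h2 : Real.sqrt G ^ 2 = G := Real.sq_sqrt hG
      nlinarith [h1, h2]
    rw [Finset.sum_congr rfl (fun i _ => this i)]
    rw [Finset.sum_add_distrib, Finset.sum_sub_distrib, ← Finset.mul_sum]
    simp [Finset.sum_const, mul_comm]
  rw [ge_iff_le, hexp]
  have hG2 : Real.sqrt G ^ 2 = G := Real.sq_sqrt hG
  have hS' : (n:ℝ) * Real.sqrt G ≤ ∑ i, Real.sqrt (x i) := by
    calc (n:ℝ) * Real.sqrt G ≤ (n:ℝ) * ((∑ i, Real.sqrt (x i)) / n) := by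
          exact mul_le_mul_of_nonneg_left hS hn'.le
      _ = ∑ i, Real.sqrt (x i) := by field_simp
  have key : ∑ i, x i - 2 * Real.sqrt G * ∑ i, Real.sqrt (x i) + n * G
      ≤ ∑ i, x i - n * G := by
    nlinarith [mul_le_mul_of_nonneg_left hS' (Real.sqrt_nonneg G), hG2]
  calc (1/n:ℝ) * (∑ i, x i - 2 * Real.sqrt G * ∑ i, Real.sqrt (x i) + n * G)
      ≤ (1/n:ℝ) * (∑ i, x i - n * G) := by
        exact mul_le_mul_of_nonneg_left key (by positivity)
    _ = (∑ i, x i) / n - G := by field_simp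
end

section
/- Let n be a positive natural number and let x_1, ..., x_n be nonnegative real numbers with arithmetic mean A = (x_1 + ... + x_n)/n and geometric mean G = (x_1 x_2 ... x_n)^(1/n). Then A - G = (1/n) ∑_{i=1}^n (√(x_i) - √G)^2 if and only if at least one of the x_i equals zero or all the x_i are equal. -/
/-!
Expanding the squares, `(1/n) ∑ (√xᵢ - √G)² = A - 2√G·M + G` where `M` is the arithmetic mean of
the `√xᵢ`, so the identity amounts to `√G (M - √G) = 0`. Now `G = 0` exactly when some `xᵢ`
vanishes, and `√G` is the geometric mean of the `√xᵢ`, so `M = √G` is the equality case of AM-GM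
for the `√xᵢ`.
-/

open Finset Real

variable {ι : Type*} (s : Finset ι) {x : ι → ℝ}

theorem sum_sqrt_sub_sqrt_sq (hx : ∀ i ∈ s, 0 ≤ x i) {c : ℝ} (hc : 0 ≤ c) :
    ∑ i ∈ s, (√(x i) - √c) ^ 2 = ∑ i ∈ s, x i - 2 * √c * ∑ i ∈ s, √(x i) + #s * c := by
  have hterm : ∀ i ∈ s, (√(x i) - √c) ^ 2 = x i - 2 * √c * √(x i) + c := fun i hi => by
    rw [sub_sq, sq_sqrt (hx i hi), sq_sqrt hc]; ring
  rw [sum_congr rfl hterm, sum_add_distrib, sum_sub_distrib, ← mul_sum, sum_const, nsmul_eq_mul]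

theorem mean_sub_eq_mean_sq_sqrt_sub_iff (hs : s.Nonempty) (hx : ∀ i ∈ s, 0 ≤ x i) {c : ℝ}
    (hc : 0 ≤ c) :
    (∑ i ∈ s, x i) / #s - c = 1 / #s * ∑ i ∈ s, (√(x i) - √c) ^ 2 ↔
      c = 0 ∨ ∑ i ∈ s, 1 / #s * √(x i) = √c := by
  obtain ⟨r, hr, rfl⟩ : ∃ r, 0 ≤ r ∧ c = r ^ 2 := ⟨√c, sqrt_nonneg c, (sq_sqrt hc).symm⟩
  have hn : (#s : ℝ) ≠ 0 := by simp [hs.ne_empty]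
  rw [sum_sqrt_sub_sqrt_sq s hx (sq_nonneg r), sqrt_sq hr, ← mul_sum, pow_eq_zero_iff two_ne_zero]
  have hfactor : (∑ i ∈ s, x i) / #s - r ^ 2 =
        1 / #s * (∑ i ∈ s, x i - 2 * r * ∑ i ∈ s, √(x i) + #s * r ^ 2) ↔
      r * (1 / #s * ∑ i ∈ s, √(x i) - r) = 0 := by
    constructor <;> intro h <;> field_simp at h ⊢ <;> linarith
  rw [hfactor, mul_eq_zero, sub_eq_zero]

theorem geom_mean_eq_zero_iff (hs : s.Nonempty) (hx : ∀ i ∈ s, 0 ≤ x i) :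
    (∏ i ∈ s, x i) ^ (1 / #s : ℝ) = 0 ↔ ∃ i ∈ s, x i = 0 := by
  rw [rpow_eq_zero (prod_nonneg hx) (by simp [hs.ne_empty]), prod_eq_zero_iff]

theorem sqrt_prod_rpow (hx : ∀ i ∈ s, 0 ≤ x i) (w : ℝ) :
    √((∏ i ∈ s, x i) ^ w) = ∏ i ∈ s, √(x i) ^ w := by
  rw [finsetProd_rpow s _ (fun i _ => sqrt_nonneg _), ← sqrt_prod s hx, sqrt_eq_rpow, sqrt_eq_rpow,
    ← rpow_mul (prod_nonneg hx), ← rpow_mul (prod_nonneg hx), mul_comm]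

theorem geom_mean_eq_arith_mean_iff (hs : s.Nonempty) (hx : ∀ i ∈ s, 0 ≤ x i) :
    ∏ i ∈ s, x i ^ (1 / #s : ℝ) = ∑ i ∈ s, 1 / #s * x i ↔ ∀ j ∈ s, ∀ k ∈ s, x j = x k :=
  geom_mean_eq_arith_mean_weighted_iff_of_pos s _ x (fun _ _ => by simp [hs.card_pos])
    (by simp [hs.ne_empty]) hx

/-- Equality case of (2.6): `A - G = (1/n) ∑ i (√(x i) - √G)^2` if and only if one of the `x i`
is zero or all the `x i` are equal. -/
theorem strong_cauchy_equality_iff (n : ℕ) (hn : 0 < n) (x : Fin n → ℝ) (hx : ∀ i, 0 ≤ x i)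
    (A G : ℝ) (hA : A = (∑ i, x i) / n) (hG : G = (∏ i, x i) ^ ((1 : ℝ) / n)) :
    A - G = (1 / n : ℝ) * ∑ i, (Real.sqrt (x i) - Real.sqrt G) ^ 2 ↔
      (∃ i, x i = 0) ∨ (∀ i j, x i = x j) := by
  subst hA hG
  have hs : (univ : Finset (Fin n)).Nonempty := univ_nonempty_iff.mpr ⟨⟨0, hn⟩⟩
  have hx' : ∀ i ∈ univ, 0 ≤ x i := fun i _ => hx i
  have hcard : (n : ℝ) = #(univ : Finset (Fin n)) := by simp
  rw [hcard, mean_sub_eq_mean_sq_sqrt_sub_iff univ hs hx' (rpow_nonneg (prod_nonneg hx') _),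
    geom_mean_eq_zero_iff univ hs hx', sqrt_prod_rpow univ hx', eq_comm,
    geom_mean_eq_arith_mean_iff univ hs fun i _ => sqrt_nonneg _]
  simp [sqrt_inj (hx _) (hx _)]
end

section
/- Let n be a positive natural number and let x_1, ..., x_n be nonnegative real numbers with arithmetic mean A = (x_1 + ... + x_n)/n and geometric mean G = (x_1 x_2 ... x_n)^(1/n). Then A - G ≥ (1/n) ∑_{i=1}^n (√(x_i) - √G)^2 + 2√G · (1/n) ∑_{i=1}^n ( x_i^{1/4} - G^{1/4} )^2. -/
open Finset Real

/-- Inequality (2.7):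
`A - G ≥ (1/n) ∑ i (√(x i) - √G)^2 + 2√G (1/n) ∑ i (x i^(1/4) - G^(1/4))^2`. -/
theorem strong_cauchy_two_terms (n : ℕ) (hn : 0 < n) (x : Fin n → ℝ) (hx : ∀ i, 0 ≤ x i)
    (A G : ℝ) (hA : A = (∑ i, x i) / n) (hG : G = (∏ i, x i) ^ ((1 : ℝ) / n)) :
    A - G ≥
      (1 / n : ℝ) * ∑ i, (Real.sqrt (x i) - Real.sqrt G) ^ 2 +
        2 * Real.sqrt G *
          ((1 / n : ℝ) * ∑ i, (x i ^ ((1 : ℝ) / 4) - G ^ ((1 : ℝ) / 4)) ^ 2) := by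
  have hP : 0 ≤ ∏ i, x i := Finset.prod_nonneg fun i _ => hx i
  have hG0 : 0 ≤ G := hG ▸ Real.rpow_nonneg hP _
  have hn' : (0 : ℝ) < n := by exact_mod_cast hn
  set q : Fin n → ℝ := fun i => x i ^ ((1 : ℝ) / 4) with hq
  set g : ℝ := G ^ ((1 : ℝ) / 4) with hg
  have hq0 : ∀ i, 0 ≤ q i := fun i => Real.rpow_nonneg (hx i) _
  have hg0 : 0 ≤ g := Real.rpow_nonneg hG0 _
  -- basic identities
  have hxq : ∀ i, x i = q i ^ 4 := fun i => by
    rw [hq, ← Real.rpow_natCast (x i ^ ((1 : ℝ) / 4)) 4, ← Real.rpow_mul (hx i)]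
    norm_num
  have hsx : ∀ i, Real.sqrt (x i) = q i ^ 2 := fun i => by
    rw [Real.sqrt_eq_rpow, hq, ← Real.rpow_natCast (x i ^ ((1 : ℝ) / 4)) 2,
      ← Real.rpow_mul (hx i)]
    norm_num
  have hGg : G = g ^ 4 := by
    rw [hg, ← Real.rpow_natCast (G ^ ((1 : ℝ) / 4)) 4, ← Real.rpow_mul hG0]
    norm_num
  have hsG : Real.sqrt G = g ^ 2 := by
    rw [Real.sqrt_eq_rpow, hg, ← Real.rpow_natCast (G ^ ((1 : ℝ) / 4)) 2,
      ← Real.rpow_mul hG0]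
    norm_num
  -- AM-GM for the fourth roots
  have key : (n : ℝ) * g ≤ ∑ i, q i := by
    have hgeq : g = ∏ i, q i ^ ((1 : ℝ) / n) := by
      have h1 : ∏ i, q i ^ ((1 : ℝ) / n) = (∏ i, q i) ^ ((1 : ℝ) / n) :=
        Real.finset_prod_rpow _ _ (fun i _ => hq0 i) _
      have h2 : (∏ i, q i) = (∏ i, x i) ^ ((1 : ℝ) / 4) :=
        Real.finset_prod_rpow _ _ (fun i _ => hx i) _
      rw [h1, h2, ← Real.rpow_mul hP, hg, hG, ← Real.rpow_mul hP]
      ring_nf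
    have hamgm := Real.geom_mean_le_arith_mean_weighted Finset.univ
      (fun _ => (1 : ℝ) / n) q (fun i _ => by positivity)
      (by simp [Finset.card_univ]; field_simp) (fun i _ => hq0 i)
    rw [← hgeq] at hamgm
    have : ∑ i : Fin n, (1 : ℝ) / n * q i = (∑ i, q i) / n := by
      rw [Finset.sum_div]
      exact Finset.sum_congr rfl fun i _ => by ring
    rw [this] at hamgm
    calc (n : ℝ) * g ≤ (n : ℝ) * ((∑ i, q i) / n) := by
          exact mul_le_mul_of_nonneg_left hamgm (le_of_lt hn')
      _ = ∑ i, q i := by field_simp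
  -- rewrite the goal in terms of q and g
  have hA' : A = (∑ i, q i ^ 4) / n := by
    rw [hA]; congr 1; exact Finset.sum_congr rfl fun i _ => hxq i
  have hsum1 : ∑ i, (Real.sqrt (x i) - Real.sqrt G) ^ 2 = ∑ i, (q i ^ 2 - g ^ 2) ^ 2 :=
    Finset.sum_congr rfl fun i _ => by rw [hsx i, hsG]
  rw [hsum1, hsG, hA', hGg]
  have ex1 : ∑ i, (q i ^ 2 - g ^ 2) ^ 2
      = (∑ i, q i ^ 4) - 2 * g ^ 2 * (∑ i, q i ^ 2) + n * g ^ 4 := by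
    have h : ∀ i : Fin n, (q i ^ 2 - g ^ 2) ^ 2
        = q i ^ 4 - 2 * g ^ 2 * q i ^ 2 + g ^ 4 := fun i => by ring
    simp only [h, Finset.sum_add_distrib, Finset.sum_sub_distrib, ← Finset.mul_sum,
      Finset.sum_const, Finset.card_univ, Fintype.card_fin, nsmul_eq_mul]
  have ex2 : ∑ i, (q i - g) ^ 2
      = (∑ i, q i ^ 2) - 2 * g * (∑ i, q i) + n * g ^ 2 := by
    have h : ∀ i : Fin n, (q i - g) ^ 2 = q i ^ 2 - 2 * g * q i + g ^ 2 := fun i => by ring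
    simp only [h, Finset.sum_add_distrib, Finset.sum_sub_distrib, ← Finset.mul_sum,
      Finset.sum_const, Finset.card_univ, Fintype.card_fin, nsmul_eq_mul]
  rw [ex1, ex2, ge_iff_le, ← sub_nonneg]
  have heq : (∑ i, q i ^ 4) / n - g ^ 4 -
      ((1 / n : ℝ) * ((∑ i, q i ^ 4) - 2 * g ^ 2 * (∑ i, q i ^ 2) + n * g ^ 4) +
        2 * g ^ 2 * ((1 / n : ℝ) * ((∑ i, q i ^ 2) - 2 * g * (∑ i, q i) + n * g ^ 2)))
      = (1 / n) * (4 * (g ^ 3 * (∑ i, q i) - n * g ^ 4)) := by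
    field_simp
    ring
  rw [heq]
  have hkey : (n : ℝ) * g ^ 4 ≤ g ^ 3 * (∑ i, q i) := by
    have := mul_le_mul_of_nonneg_left key (pow_nonneg hg0 3)
    nlinarith [this]
  have h4 : (0 : ℝ) ≤ 4 * (g ^ 3 * (∑ i, q i) - n * g ^ 4) := by linarith
  positivity
end

section
/- Let n ≥ 2 be a natural number. Then for any nonnegative real numbers x_1, ..., x_n, (x_1 + ... + x_n)/n - (x_1 x_2 ... x_n)^(1/n) ≥ (1/(n(n-1))) ∑_{1 ≤ i < j ≤ n} (√(x_i) - √(x_j))^2. -/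
/-!
With `y i = √(x i)`, the identity `∑_{i<j} (y i - y j)^2 = n ∑ (y i)^2 - (∑ y i)^2` turns
the inequality into `(∏ x i)^(1/n) ≤ (1/(n(n-1))) ∑_{i ≠ j} y i y j`. This is AM-GM for the
`n(n-1)` off-diagonal products `y i y j`, since their product is `(∏ x i)^(n-1)`.
-/

open Finset Real

namespace Finset

variable {ι M : Type*}

theorem prod_offDiag_fst [CommMonoid M] (s : Finset ι) (f : ι → M) :
    ∏ p ∈ s.offDiag, f p.1 = ∏ i ∈ s, f i ^ (#s - 1) := by
  classical
  rw [prod_finset_product' _ s (fun i => s.erase i) (f := fun i _ => f i)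
    (by simp [and_comm, eq_comm])]
  exact prod_congr rfl fun i hi => by rw [prod_const, card_erase_of_mem hi]

theorem prod_offDiag_snd [CommMonoid M] (s : Finset ι) (f : ι → M) :
    ∏ p ∈ s.offDiag, f p.2 = ∏ i ∈ s, f i ^ (#s - 1) := by
  rw [← prod_offDiag_fst]
  exact prod_nbij' Prod.swap Prod.swap (by simp; tauto) (by simp; tauto) (by simp) (by simp)
    (by simp)

theorem prod_offDiag_mul_eq_prod_sq_pow [CommMonoid M] [Fintype ι] (f : ι → M) :
    ∏ p ∈ univ.offDiag, f p.1 * f p.2 = (∏ i, f i ^ 2) ^ (Fintype.card ι - 1) := by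
  rw [prod_mul_distrib, prod_offDiag_fst, prod_offDiag_snd, ← prod_mul_distrib, ← prod_pow,
    card_univ]
  exact prod_congr rfl fun i _ => by rw [sq, mul_pow]

theorem sum_offDiag_eq_sum_sum_sub [AddCommGroup M] (s : Finset ι) (f : ι → ι → M) :
    ∑ p ∈ s.offDiag, f p.1 p.2 = ∑ i ∈ s, ∑ j ∈ s, f i j - ∑ i ∈ s, f i i := by
  classical
  rw [← sum_product', ← diag_union_offDiag, sum_union (disjoint_diag_offDiag s), sum_diag]
  abel

theorem sum_offDiag_eq_two_nsmul_sum_sum_Ioi [Fintype ι] [LinearOrder ι]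
    [LocallyFiniteOrderTop ι] [AddCommMonoid M] (f : ι → ι → M) (hf : ∀ i j, f i j = f j i) :
    ∑ p ∈ univ.offDiag, f p.1 p.2 = 2 • ∑ i, ∑ j ∈ Ioi i, f i j := by
  have hlt : ∑ p ∈ univ.offDiag with p.1 < p.2, f p.1 p.2 = ∑ i, ∑ j ∈ Ioi i, f i j :=
    sum_finset_product' _ _ _ (by simpa using fun _ _ => ne_of_lt)
  have hgt : ∑ p ∈ univ.offDiag with ¬p.1 < p.2, f p.1 p.2 = ∑ i, ∑ j ∈ Ioi i, f i j := by
    rw [← hlt]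
    refine sum_nbij' Prod.swap Prod.swap ?_ ?_ (by simp) (by simp) (fun p _ => hf _ _) <;>
      grind
  rw [← sum_filter_add_sum_filter_not _ (fun p => p.1 < p.2), hlt, hgt, two_nsmul]

section CommRing

variable {R : Type*} [CommRing R] [Fintype ι]

theorem sum_offDiag_mul (y : ι → R) :
    ∑ p ∈ univ.offDiag, y p.1 * y p.2 = (∑ i, y i) ^ 2 - ∑ i, y i ^ 2 := by
  rw [sum_offDiag_eq_sum_sum_sub (f := fun a b => y a * y b), sq, sum_mul_sum]
  simp only [sq]

theorem sum_offDiag_sub_sq (y : ι → R) :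
    ∑ p ∈ univ.offDiag, (y p.1 - y p.2) ^ 2
      = 2 * (Fintype.card ι * ∑ i, y i ^ 2 - (∑ i, y i) ^ 2) := by
  rw [sum_offDiag_eq_sum_sum_sub (f := fun a b => (y a - y b) ^ 2)]
  simp only [sub_self, sub_sq, sum_add_distrib, sum_sub_distrib, sum_const, card_univ,
    ← sum_mul, ← mul_sum, nsmul_eq_mul]
  ring

theorem sum_sum_Ioi_sub_sq [NoZeroDivisors R] [CharZero R] [LinearOrder ι]
    [LocallyFiniteOrderTop ι] (y : ι → R) :
    ∑ i, ∑ j ∈ Ioi i, (y i - y j) ^ 2 = Fintype.card ι * ∑ i, y i ^ 2 - (∑ i, y i) ^ 2 := by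
  have h := sum_offDiag_sub_sq y
  rw [sum_offDiag_eq_two_nsmul_sum_sum_Ioi (fun i j => (y i - y j) ^ 2)
    (fun i j => by ring), two_nsmul, ← two_mul] at h
  exact mul_left_cancel₀ two_ne_zero h

end CommRing

end Finset

namespace Real

variable {ι : Type*} [Fintype ι]

theorem geom_mean_sq_le_sum_offDiag_mul_div (y : ι → ℝ) (hy : ∀ i, 0 ≤ y i)
    (hι : 2 ≤ Fintype.card ι) :
    (∏ i, y i ^ 2) ^ ((1 : ℝ) / Fintype.card ι)
      ≤ (∑ p ∈ univ.offDiag, y p.1 * y p.2) / (Fintype.card ι * (Fintype.card ι - 1)) := by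
  set n := Fintype.card ι
  have hcard : ∑ _p ∈ (univ : Finset ι).offDiag, (1 : ℝ) = n * (n - 1) := by
    rw [sum_const, offDiag_card, card_univ, nsmul_one,
      Nat.cast_sub (Nat.le_mul_self n), Nat.cast_mul]
    ring
  have hn : (2 : ℝ) ≤ n := by exact_mod_cast hι
  have hpos : (0 : ℝ) < n * (n - 1) := by nlinarith
  have amgm := geom_mean_le_arith_mean univ.offDiag (fun _ => 1) (fun p => y p.1 * y p.2)
    (fun _ _ => zero_le_one) (hcard ▸ hpos) (fun p _ => mul_nonneg (hy _) (hy _))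
  simp only [rpow_one, one_mul, hcard, prod_offDiag_mul_eq_prod_sq_pow] at amgm
  convert amgm using 1
  rw [← rpow_natCast, ← rpow_mul (prod_nonneg fun i _ => sq_nonneg (y i)),
    Nat.cast_sub (by omega : 1 ≤ n), Nat.cast_one]
  congr 1
  field_simp [show (n : ℝ) - 1 ≠ 0 by linarith]

theorem sum_sum_Ioi_sub_sq_div_le_arith_mean_sub_geom_mean [LinearOrder ι]
    [LocallyFiniteOrderTop ι] (y : ι → ℝ) (hy : ∀ i, 0 ≤ y i) (hι : 2 ≤ Fintype.card ι) :
    1 / (Fintype.card ι * (Fintype.card ι - 1)) * ∑ i, ∑ j ∈ Ioi i, (y i - y j) ^ 2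
      ≤ (∑ i, y i ^ 2) / Fintype.card ι - (∏ i, y i ^ 2) ^ ((1 : ℝ) / Fintype.card ι) := by
  set n := Fintype.card ι
  have hn : (2 : ℝ) ≤ n := by exact_mod_cast hι
  have amgm := geom_mean_sq_le_sum_offDiag_mul_div y hy hι
  rw [sum_offDiag_mul] at amgm
  rw [sum_sum_Ioi_sub_sq]
  have hsplit : (∑ i, y i ^ 2) / n - 1 / (n * (n - 1)) * (n * ∑ i, y i ^ 2 - (∑ i, y i) ^ 2)
      = ((∑ i, y i) ^ 2 - ∑ i, y i ^ 2) / (n * (n - 1)) := by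
    field_simp [show (n : ℝ) - 1 ≠ 0 by linarith]
    ring
  linarith

end Real

/-- Second strong Cauchy inequality (3.1): for `n ≥ 2` and nonnegative `x i`,
`(x_1 + ⋯ + x_n)/n - (x_1 ⋯ x_n)^(1/n) ≥ (1/(n(n-1))) ∑_{i < j} (√(x i) - √(x j))^2`. -/
theorem second_strong_cauchy (n : ℕ) (hn : 2 ≤ n) (x : Fin n → ℝ) (hx : ∀ i, 0 ≤ x i) :
    (∑ i, x i) / n - (∏ i, x i) ^ ((1 : ℝ) / n) ≥
      (1 / (n * (n - 1)) : ℝ) *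
        ∑ i, ∑ j ∈ Finset.Ioi i, (Real.sqrt (x i) - Real.sqrt (x j)) ^ 2 := by
  have h := sum_sum_Ioi_sub_sq_div_le_arith_mean_sub_geom_mean (fun i => √(x i))
    (fun i => sqrt_nonneg _) (by simpa using hn)
  simpa only [sq_sqrt (hx _), Fintype.card_fin] using h
end

section
/- Let n ≥ 2 be a natural number and let C be a real number such that for all nonnegative real numbers x_1, ..., x_n one has (x_1 + ... + x_n)/n - (x_1 x_2 ... x_n)^(1/n) ≥ C · ∑_{1 ≤ i < j ≤ n} (√(x_i) - √(x_j))^2. Then C ≤ 1/(n(n-1)). -/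
/-!
Test the inequality on the spike `x = (s², 1, …, 1)` with `s > 1`. Its geometric mean `s^(2/n)` is
at least `1`, so the left side is at most `(s² - 1)/n`, while the right side is
`C (n - 1) (s - 1)²`. Dividing by `s - 1` gives `C n (n - 1) ≤ (s + 1)/(s - 1)`, and letting
`s → ∞` yields `C n (n - 1) ≤ 1`.
-/

open Finset Real

lemma le_one_of_forall_mul_sq_sub_one_le {a : ℝ} (h : ∀ s > 1, a * (s - 1) ^ 2 ≤ s ^ 2 - 1) :
    a ≤ 1 := by
  refine le_of_forall_pos_le_add fun ε hε => ?_
  have hs := h (1 + 2 / ε) (by simp; positivity)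
  rw [add_sub_cancel_left, ← le_div_iff₀ (by positivity)] at hs
  calc a ≤ _ := hs
    _ = 1 + ε := by field_simp; ring

lemma sum_update_one {ι : Type*} [Fintype ι] [DecidableEq ι] (i₀ : ι) (a : ℝ) :
    ∑ i, Function.update (1 : ι → ℝ) i₀ a i = a + (Fintype.card ι - 1) := by
  have : 1 ≤ Fintype.card ι := Fintype.card_pos_iff.2 ⟨i₀⟩
  simp [sum_update_of_mem (mem_univ i₀), card_sdiff, Nat.cast_sub this]

lemma sum_Ioi_sq_sub_of_eq_off_min {ι : Type*} [Fintype ι] [LinearOrder ι]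
    [LocallyFiniteOrderTop ι] (g : ι → ℝ) {i₀ : ι} (hmin : ∀ j, i₀ ≤ j) {c : ℝ}
    (hg : ∀ i ≠ i₀, g i = c) :
    ∑ i, ∑ j ∈ Ioi i, (g i - g j) ^ 2 = #(Ioi i₀) * (g i₀ - c) ^ 2 := by
  rw [sum_eq_single_of_mem i₀ (mem_univ _)]
  · rw [sum_congr rfl fun j hj => by rw [hg j (mem_Ioi.1 hj).ne'], sum_const, nsmul_eq_mul]
  · intro i _ hi
    refine sum_eq_zero fun j hj => ?_
    have hj : j ≠ i₀ := ((hmin i).trans_lt (mem_Ioi.1 hj)).ne'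
    rw [hg i hi, hg j hj, sub_self, sq, mul_zero]

/-- Optimality of the constant `1/(n(n-1))` in (3.1): if
`(x_1 + ⋯ + x_n)/n - (x_1 ⋯ x_n)^(1/n) ≥ C ∑_{i<j} (√(x i) - √(x j))^2` holds for all
nonnegative `x i`, then `C ≤ 1/(n(n-1))`. -/
theorem second_strong_cauchy_constant_optimal (n : ℕ) (hn : 2 ≤ n) (C : ℝ)
    (h : ∀ x : Fin n → ℝ, (∀ i, 0 ≤ x i) →
      (∑ i, x i) / n - (∏ i, x i) ^ ((1 : ℝ) / n) ≥
        C * ∑ i, ∑ j ∈ Finset.Ioi i, (Real.sqrt (x i) - Real.sqrt (x j)) ^ 2) :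
    C ≤ 1 / (n * (n - 1)) := by
  have hn₁ : (1 : ℝ) < n := by exact_mod_cast hn
  rw [le_div_iff₀ (by nlinarith)]
  refine le_one_of_forall_mul_sq_sub_one_le fun s hs => ?_
  let i₀ : Fin n := ⟨0, by omega⟩
  let x : Fin n → ℝ := Function.update 1 i₀ (s ^ 2)
  have hx : ∀ i, 0 ≤ x i := fun i => by
    rcases eq_or_ne i i₀ with rfl | hi <;> simp [x, *, sq_nonneg]
  have hprod : ∏ i, x i = s ^ 2 := by simp [x, prod_update_of_mem (mem_univ i₀)]
  have hgm : 1 ≤ (∏ i, x i) ^ ((1 : ℝ) / n) := hprod ▸ one_le_rpow (by nlinarith) (by positivity)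
  have hpairs : ∑ i, ∑ j ∈ Ioi i, (√(x i) - √(x j)) ^ 2 = (n - 1) * (s - 1) ^ 2 := by
    rw [sum_Ioi_sq_sub_of_eq_off_min (fun i => √(x i)) (i₀ := i₀) (fun j => Nat.zero_le j.val)
      (c := 1) fun i hi => by simp [x, hi]]
    simp [x, i₀, Fin.card_Ioi, Nat.cast_sub (by omega : 1 ≤ n), sqrt_sq (by linarith : 0 ≤ s)]
  have key := h x hx
  rw [sum_update_one, Fintype.card_fin, hpairs] at key
  have : C * ((n - 1) * (s - 1) ^ 2) ≤ (s ^ 2 - 1) / n := by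
    have : (s ^ 2 + (n - 1)) / n - 1 = (s ^ 2 - 1) / n := by field_simp; ring
    linarith
  rw [le_div_iff₀ (by linarith)] at this
  linarith
end

section
/- Let x > y > 0 be real numbers. Then the function h(t) = (x^{1/t} - y^{1/t})^t is (strictly) decreasing on the interval (0, ∞), i.e., for all real s, t with 0 < s < t one has h(t) ≤ h(s). -/
open Real

lemma my_rpow_subadd (a b p : ℝ) (ha : 0 ≤ a) (hb : 0 ≤ b) (hp : 0 ≤ p) (hp1 : p ≤ 1) :
    (a + b) ^ p ≤ a ^ p + b ^ p := by
  have h := NNReal.rpow_add_le_add_rpow a.toNNReal b.toNNReal hp hp1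
  have h2 : (((a.toNNReal + b.toNNReal : NNReal)) : ℝ) ^ p ≤
      ((a.toNNReal : ℝ)) ^ p + ((b.toNNReal : ℝ)) ^ p := by
    exact_mod_cast h
  rwa [NNReal.coe_add, Real.coe_toNNReal a ha, Real.coe_toNNReal b hb] at h2

/-- For real `x > y > 0`, the function `h(t) = (x^(1/t) - y^(1/t))^t` is decreasing on
`(0, ∞)`: for `0 < s < t`, `h(t) ≤ h(s)`. -/
theorem h_decreasing (x y : ℝ) (hy : 0 < y) (hxy : y < x) (s t : ℝ) (hs : 0 < s)
    (hst : s < t) :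
    (x ^ (1 / t) - y ^ (1 / t)) ^ t ≤ (x ^ (1 / s) - y ^ (1 / s)) ^ s := by
  have ht : 0 < t := hs.trans hst
  have hx : 0 < x := hy.trans hxy
  set u : ℝ := x ^ (1 / s) with hu
  set v : ℝ := y ^ (1 / s) with hv
  have hupos : 0 < u := Real.rpow_pos_of_pos hx _
  have hvpos : 0 < v := Real.rpow_pos_of_pos hy _
  have hvu : v < u := Real.rpow_lt_rpow hy.le hxy (by positivity)
  have hr : (0:ℝ) < s / t := by positivity
  have hr1 : s / t ≤ 1 := by
    rw [div_le_one ht]; exact hst.le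
  have hxu : x ^ (1 / t) = u ^ (s / t) := by
    rw [hu, ← Real.rpow_mul hx.le]
    congr 1
    field_simp
  have hyv : y ^ (1 / t) = v ^ (s / t) := by
    rw [hv, ← Real.rpow_mul hy.le]
    congr 1
    field_simp
  rw [hxu, hyv]
  have key : u ^ (s / t) - v ^ (s / t) ≤ (u - v) ^ (s / t) := by
    have h1 : u ^ (s / t) ≤ (u - v) ^ (s / t) + v ^ (s / t) := by
      have := my_rpow_subadd (u - v) v (s / t) (by linarith) hvpos.le hr.le hr1
      rwa [sub_add_cancel] at this
    linarith
  have hnn : 0 ≤ u ^ (s / t) - v ^ (s / t) :=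
    sub_nonneg.2 (Real.rpow_le_rpow hvpos.le hvu.le hr.le)
  calc (u ^ (s / t) - v ^ (s / t)) ^ t ≤ ((u - v) ^ (s / t)) ^ t :=
        Real.rpow_le_rpow hnn key ht.le
    _ = (u - v) ^ s := by
        rw [← Real.rpow_mul (by linarith : (0:ℝ) ≤ u - v)]
        congr 1
        field_simp
end

section
/- Let n ≥ 2 be a natural number, and let C > 0 and α > 0 be real numbers such that for all nonnegative real numbers x_1, ..., x_n one has (x_1 + ... + x_n)/n - (x_1 x_2 ... x_n)^(1/n) ≥ C · ∑_{1 ≤ i < j ≤ n} | x_i^{1/α} - x_j^{1/α} |^α. Then C ≤ 1/(n(n-1)) and α ≥ 2. -/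
open Finset Real

/-!
Test the inequality on vectors with one coordinate `a` and all others `b`. For `(1, 0, …, 0)` the
left side is `1/n` and the right side `C (n - 1)`. For `((1 + s)^n, 1, …, 1)` the AM-GM gap is
`((1 + s)^n - 1 - n s)/n = O(s²)`, while, if `α < 2 ≤ n`, the pairwise sum is
`(n - 1) ((1 + s)^(n/α) - 1)^α ≥ (n - 1) s^α`; letting `s → 0` contradicts `α < 2`.
-/

lemma one_add_pow_sub_le {R : Type*} [CommRing R] [LinearOrder R] [IsStrictOrderedRing R]
    (n : ℕ) {s : R} (hs : 0 ≤ s) :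
    (1 + s) ^ n - 1 - n * s ≤ n ^ 2 * s ^ 2 * (1 + s) ^ n := by
  induction n with
  | zero => simp
  | succ n ih =>
    have h1 : 1 ≤ (1 + s) ^ (n + 1) := one_le_pow₀ (by linarith)
    have h2 : n * s ^ 2 ≤ (2 * n + 1) * s ^ 2 * (1 + s) ^ (n + 1) := by
      nlinarith [mul_nonneg (by positivity : (0 : R) ≤ (2 * n + 1) * s ^ 2) (sub_nonneg.2 h1),
        mul_nonneg (Nat.cast_nonneg (α := R) n) (sq_nonneg s)]
    have h3 := mul_le_mul_of_nonneg_left ih (by linarith : (0 : R) ≤ 1 + s)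
    push_cast
    rw [pow_succ] at h1 h2 ⊢
    linear_combination h3 + h2

section spike

variable {n : ℕ} [NeZero n]

lemma Fin.sum_eq_of_forall_ne_zero {M : Type*} [AddCommMonoid M] {x : Fin n → M} {b : M}
    (hx : ∀ i ≠ 0, x i = b) : ∑ i, x i = x 0 + (n - 1) • b := by
  rw [← add_sum_erase _ _ (mem_univ 0), sum_congr rfl fun i hi => hx i (ne_of_mem_erase hi),
    Finset.sum_const, card_erase_of_mem (mem_univ 0), card_univ, Fintype.card_fin]

lemma Fin.prod_eq_of_forall_ne_zero {M : Type*} [CommMonoid M] {x : Fin n → M} {b : M}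
    (hx : ∀ i ≠ 0, x i = b) : ∏ i, x i = x 0 * b ^ (n - 1) := by
  rw [← mul_prod_erase _ _ (mem_univ 0), prod_congr rfl fun i hi => hx i (ne_of_mem_erase hi),
    Finset.prod_const, card_erase_of_mem (mem_univ 0), card_univ, Fintype.card_fin]

lemma Fin.sum_sum_Ioi_eq_of_forall_ne_zero {β M : Type*} [AddCommMonoid M] (f : β → β → M)
    {x : Fin n → β} {b : β} (hx : ∀ i ≠ 0, x i = b) (hf : f b b = 0) :
    ∑ i, ∑ j ∈ Finset.Ioi i, f (x i) (x j) = (n - 1) • f (x 0) b := by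
  have hIoi : ∀ i, ∀ j ∈ Finset.Ioi i, x j = b := fun i j hj =>
    hx j ((Fin.zero_le i).trans_lt (mem_Ioi.1 hj)).ne'
  rw [sum_eq_single 0 (fun i _ hi => sum_eq_zero fun j hj => by rw [hx i hi, hIoi i j hj, hf])
    (fun h => absurd (mem_univ 0) h), sum_congr rfl fun j hj => by rw [hIoi 0 j hj],
    Finset.sum_const, Fin.card_Ioi]
  simp

end spike

def AMGMGapBound (n : ℕ) (C α : ℝ) : Prop :=
  ∀ x : Fin n → ℝ, (∀ i, 0 ≤ x i) →
    (∑ i, x i) / n - (∏ i, x i) ^ ((1 : ℝ) / n) ≥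
      C * ∑ i, ∑ j ∈ Finset.Ioi i, |x i ^ (1 / α) - x j ^ (1 / α)| ^ α

lemma AMGMGapBound.spike {n : ℕ} [NeZero n] {C α : ℝ} (h : AMGMGapBound n C α) (hα : α ≠ 0)
    {a b : ℝ} (ha : 0 ≤ a) (hb : 0 ≤ b) :
    C * ((n - 1) * |a ^ (1 / α) - b ^ (1 / α)| ^ α) ≤
      (a + (n - 1) * b) / n - (a * b ^ (n - 1)) ^ ((1 : ℝ) / n) := by
  set x : Fin n → ℝ := fun i => if i = 0 then a else b
  have hx : ∀ i ≠ 0, x i = b := fun i hi => if_neg hi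
  have := h x fun i => by by_cases hi : i = 0 <;> simp [x, hi, ha, hb]
  rw [Fin.sum_eq_of_forall_ne_zero hx, Fin.prod_eq_of_forall_ne_zero hx,
    Fin.sum_sum_Ioi_eq_of_forall_ne_zero (fun u v => |u ^ (1 / α) - v ^ (1 / α)| ^ α) hx
      (by simp [zero_rpow hα])] at this
  simpa [x, nsmul_eq_mul, Nat.cast_pred (Nat.pos_of_neZero n)] using this

lemma two_le_of_rpow_le_mul_sq {α c K : ℝ} (hc : 0 < c)
    (h : ∀ s : ℝ, 0 < s → s ≤ 1 → c * s ^ α ≤ K * s ^ 2) : 2 ≤ α := by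
  by_contra! hα
  have hlim := tendsto_rpow_neg_nhdsGT_zero (sub_neg.2 hα)
  obtain ⟨s, hsK, hs0, hs1⟩ := ((hlim.eventually_gt_atTop (K / c)).and
    (Ioc_mem_nhdsGT zero_lt_one)).exists
  have hsα : s ^ α = s ^ (α - 2) * s ^ 2 := by
    rw [← rpow_natCast, ← rpow_add hs0, Nat.cast_ofNat, sub_add_cancel]
  have := h s hs0 hs1
  rw [hsα, ← mul_assoc] at this
  have := le_of_mul_le_mul_right this (pow_pos hs0 2)
  rw [div_lt_iff₀ hc] at hsK
  linarith

namespace AMGMGapBound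

variable {n : ℕ} {C α : ℝ}

lemma le_one_div_mul_sub_one (h : AMGMGapBound n C α) (hn : 2 ≤ n) (hα : α ≠ 0) :
    C ≤ 1 / (n * (n - 1)) := by
  have : NeZero n := ⟨by omega⟩
  have hn' : (2 : ℝ) ≤ n := by exact_mod_cast hn
  have := h.spike hα zero_le_one le_rfl
  simp only [one_rpow, zero_rpow (one_div_ne_zero hα), sub_zero, abs_one, mul_zero, add_zero,
    zero_pow (by omega : n - 1 ≠ 0), zero_rpow (by positivity : (1 : ℝ) / n ≠ 0)] at this
  rw [le_div_iff₀ (by nlinarith)]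
  rw [le_div_iff₀ (by linarith)] at this
  linarith

lemma two_le (h : AMGMGapBound n C α) (hn : 2 ≤ n) (hC : 0 < C) (hα : 0 < α) : 2 ≤ α := by
  by_contra! hα2
  have : NeZero n := ⟨by omega⟩
  have hn' : (2 : ℝ) ≤ n := by exact_mod_cast hn
  refine (two_le_of_rpow_le_mul_sq (c := C * (n - 1)) (K := n * 2 ^ n) (by nlinarith)
    fun s hs0 hs1 => ?_).not_gt hα2
  have hroot : ((1 + s) ^ n) ^ ((1 : ℝ) / n) = 1 + s := by
    rw [one_div, pow_rpow_inv_natCast (by linarith) (NeZero.ne n)]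
  have hgap : ((1 + s) ^ n + (n - 1)) / n - (1 + s) ≤ n * 2 ^ n * s ^ 2 := by
    have h2 : (1 + s) ^ n ≤ 2 ^ n := pow_le_pow_left₀ (by linarith) (by linarith) n
    rw [div_sub' (by positivity), div_le_iff₀ (by positivity)]
    nlinarith [one_add_pow_sub_le n hs0.le, mul_le_mul_of_nonneg_left h2
      (by positivity : (0 : ℝ) ≤ n ^ 2 * s ^ 2)]
  have hpair : s ^ α ≤ |((1 + s) ^ n) ^ (1 / α) - 1 ^ (1 / α)| ^ α := by
    rw [one_rpow, ← rpow_natCast, ← rpow_mul (by linarith)]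
    refine rpow_le_rpow hs0.le ?_ hα.le
    have : 1 + s ≤ (1 + s) ^ (n * (1 / α)) :=
      self_le_rpow_of_one_le (by linarith) (by rw [mul_one_div, one_le_div hα]; linarith)
    rw [abs_of_nonneg (by linarith)]
    linarith
  have := h.spike hα.ne' (a := (1 + s) ^ n) (b := 1) (by positivity) zero_le_one
  simp only [one_pow, mul_one, hroot] at this
  nlinarith [mul_le_mul_of_nonneg_left hpair (by nlinarith : 0 ≤ C * (n - 1))]

end AMGMGapBound

/-- Optimality of the constants in (4.6): if `C > 0` and `α > 0` are such that
`(x_1 + ⋯ + x_n)/n - (x_1 ⋯ x_n)^(1/n) ≥ C ∑_{i<j} |x i^(1/α) - x j^(1/α)|^α` for all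
nonnegative `x i`, then `C ≤ 1/(n(n-1))` and `α ≥ 2`. -/
theorem pairwise_constants_optimal (n : ℕ) (hn : 2 ≤ n) (C α : ℝ) (hC : 0 < C)
    (hα : 0 < α)
    (h : ∀ x : Fin n → ℝ, (∀ i, 0 ≤ x i) →
      (∑ i, x i) / n - (∏ i, x i) ^ ((1 : ℝ) / n) ≥
        C * ∑ i, ∑ j ∈ Finset.Ioi i, |x i ^ (1 / α) - x j ^ (1 / α)| ^ α) :
    C ≤ 1 / (n * (n - 1)) ∧ 2 ≤ α :=
  ⟨AMGMGapBound.le_one_div_mul_sub_one h hn hα.ne', AMGMGapBound.two_le h hn hC hα⟩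
end
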